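/- arXiv:2405.04346 — 2 statements merged into one kernel-verified Lean document; each statement's English description precedes it below -/
import Mathlib

section
/- (Characterization of Levenshtein-distance-1 operations.) Let S be a nonempty list over Γ and let S' be a list over Γ with d_lev(S, S') = 1. Then there exist an index i < 2·|S| + 1 and an element c : Option Γ such that S' = ψ((φ(S)).set i c). -/
/-! Mathlib's `Data/List/EditDistance/Defs.lean` (removed since) restated verbatim. -/

/-- A cost function for Levenshtein distance (as in the old Mathlib). -/
structure Levenshtein.Cost (α β δ : Type*) where
  delete : α → δ
  insert : β → δ
  substitute : α → β → δ

/-- The default unit cost (as in the old Mathlib). -/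
def Levenshtein.defaultCost {α : Type*} [DecidableEq α] : Levenshtein.Cost α α ℕ where
  delete _ := 1
  insert _ := 1
  substitute a b := if a = b then 0 else 1

/-- Inner loop of `suffixLevenshtein` (as in the old Mathlib). -/
def Levenshtein.impl {α β δ : Type*} [AddZeroClass δ] [Min δ]
    (C : Levenshtein.Cost α β δ) (xs : List α) (y : β) (d : {r : List δ // 0 < r.length}) :
    {r : List δ // 0 < r.length} :=
  let ⟨ds, w⟩ := d
  xs.zip (ds.zip ds.tail) |>.foldr
    (init := ⟨[C.insert y + ds.getLast (List.length_pos_iff.mp w)], by simp⟩)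
    (fun ⟨x, d₀, d₁⟩ ⟨r, w⟩ =>
      ⟨min (C.delete x + r[0]) (min (C.insert y + d₀) (C.substitute x y + d₁)) :: r, by simp⟩)

/-- Levenshtein distances of all suffixes (as in the old Mathlib). -/
def suffixLevenshtein {α β δ : Type*} [AddZeroClass δ] [Min δ]
    (C : Levenshtein.Cost α β δ) (xs : List α) (ys : List β) :
    {r : List δ // 0 < r.length} :=
  ys.foldr
    (Levenshtein.impl C xs)
    (xs.foldr (init := ⟨[0], by simp⟩) (fun a ⟨r, w⟩ => ⟨(C.delete a + r[0]) :: r, by simp⟩))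

/-- The Levenshtein distance (as in the old Mathlib). -/
def levenshtein {α β δ : Type*} [AddZeroClass δ] [Min δ]
    (C : Levenshtein.Cost α β δ) (xs : List α) (ys : List β) : δ :=
  let ⟨r, w⟩ := suffixLevenshtein C xs ys
  r[0]

/-- The expansion map: insert the special symbol `ξ` (encoded as `none`)
before and after every character of `S`. -/
def phi {Γ : Type*} (S : List Γ) : List (Option Γ) :=
  none :: S.flatMap (fun c => [some c, none])

/-- The contraction map: remove all occurrences of `ξ` (encoded as `none`). -/
def psi {Γ : Type*} (T : List (Option Γ)) : List Γ :=
  T.filterMap id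

/-- The Levenshtein (edit) distance with unit costs. -/
def dlev {Γ : Type*} [DecidableEq Γ] (S S' : List Γ) : ℕ :=
  levenshtein Levenshtein.defaultCost S S'

/-! By the recursion for `levenshtein`, distance `1` means that `S'` arises from `S` by a
single insertion, deletion or substitution. In `phi S` the gaps of `S` sit at the even
positions and its letters at the odd ones, so an insertion overwrites a gap with `some a`,
while a deletion or substitution overwrites a letter with `none` or `some b`; `psi` then
reads off `S'`. -/

namespace Levenshtein

variable {α β δ : Type*} [AddZeroClass δ] [Min δ] (C : Cost α β δ)

theorem impl_cons_val (x : α) (xs : List α) (y : β) (s : {r : List δ // 0 < r.length})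
    (d : δ) (ds : List δ) (hs : s.1 = d :: ds) (w : 0 < ds.length) :
    (impl C (x :: xs) y s).1 =
      min (C.delete x + (impl C xs y ⟨ds, w⟩).1[0]'(impl C xs y ⟨ds, w⟩).2)
        (min (C.insert y + d) (C.substitute x y + ds[0])) :: (impl C xs y ⟨ds, w⟩).1 := by
  obtain ⟨_, _⟩ := s
  subst hs
  match ds, w with | _ :: _, _ => rfl

theorem length_impl (xs : List α) (y : β) (s : {r : List δ // 0 < r.length})
    (hs : s.1.length = xs.length + 1) :
    (impl C xs y s).1.length = xs.length + 1 := by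
  induction xs generalizing s with
  | nil => rfl
  | cons x xs ih =>
    obtain ⟨_ | ⟨d₁, _ | ⟨d₂, ds⟩⟩, _⟩ := s <;> simp at hs
    rw [impl_cons_val C x xs y _ d₁ (d₂ :: ds) rfl (by simp)]
    simpa using ih ⟨d₂ :: ds, by simp⟩ (by simpa using hs)

end Levenshtein

section levenshtein

open Levenshtein

variable {α β δ : Type*} [AddZeroClass δ] [Min δ] (C : Cost α β δ)

theorem length_suffixLevenshtein (xs : List α) (ys : List β) :
    (suffixLevenshtein C xs ys).1.length = xs.length + 1 := by
  induction ys with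
  | nil => induction xs <;> simp_all [suffixLevenshtein]
  | cons y ys ih => exact length_impl C xs y _ ih

theorem suffixLevenshtein_cons_left_cons_right (x : α) (xs : List α) (y : β) (ys : List β)
    (h : (suffixLevenshtein C (x :: xs) ys).1 =
      levenshtein C (x :: xs) ys :: (suffixLevenshtein C xs ys).1) :
    (suffixLevenshtein C (x :: xs) (y :: ys)).1 =
      min (C.delete x + levenshtein C xs (y :: ys))
        (min (C.insert y + levenshtein C (x :: xs) ys)
          (C.substitute x y + levenshtein C xs ys)) :: (suffixLevenshtein C xs (y :: ys)).1 :=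
  impl_cons_val C x xs y _ _ _ h (suffixLevenshtein C xs ys).2

theorem suffixLevenshtein_cons_left (x : α) (xs : List α) (ys : List β) :
    (suffixLevenshtein C (x :: xs) ys).1 =
      levenshtein C (x :: xs) ys :: (suffixLevenshtein C xs ys).1 := by
  induction ys with
  | nil => rfl
  | cons y ys ih =>
    have key := suffixLevenshtein_cons_left_cons_right C x xs y ys ih
    show _ = (suffixLevenshtein C (x :: xs) (y :: ys)).1[0]'_ :: _
    simp only [key, List.getElem_cons_zero]

@[simp] theorem levenshtein_nil_cons (y : β) (ys : List β) :
    levenshtein C ([] : List α) (y :: ys) = C.insert y + levenshtein C [] ys := by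
  obtain ⟨d, hd⟩ := List.length_eq_one_iff.mp (length_suffixLevenshtein C ([] : List α) ys)
  show (impl C [] y (suffixLevenshtein C [] ys)).1[0]'_ =
    C.insert y + (suffixLevenshtein C [] ys).1[0]'(suffixLevenshtein C [] ys).2
  generalize suffixLevenshtein C ([] : List α) ys = s at hd ⊢
  obtain ⟨_, _⟩ := s
  subst hd
  rfl

@[simp] theorem levenshtein_cons_nil (x : α) (xs : List α) :
    levenshtein C (x :: xs) ([] : List β) = C.delete x + levenshtein C xs [] := rfl

theorem levenshtein_cons_cons (x : α) (xs : List α) (y : β) (ys : List β) :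
    levenshtein C (x :: xs) (y :: ys) =
      min (C.delete x + levenshtein C xs (y :: ys))
        (min (C.insert y + levenshtein C (x :: xs) ys)
          (C.substitute x y + levenshtein C xs ys)) := by
  have key := suffixLevenshtein_cons_left_cons_right C x xs y ys
    (suffixLevenshtein_cons_left C x xs ys)
  show (suffixLevenshtein C (x :: xs) (y :: ys)).1[0]'_ = _
  simp only [key, List.getElem_cons_zero]

end levenshtein

section dlev

variable {Γ : Type*} [DecidableEq Γ]

@[simp] theorem dlev_nil_left (S' : List Γ) : dlev [] S' = S'.length := by
  induction S' with
  | nil => rfl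
  | cons y ys ih => simp_all [dlev, Levenshtein.defaultCost, add_comm]

@[simp] theorem dlev_nil_right (S : List Γ) : dlev S [] = S.length := by
  induction S with
  | nil => rfl
  | cons x xs ih => simp_all [dlev, Levenshtein.defaultCost, add_comm]

theorem dlev_cons_cons (x : Γ) (xs : List Γ) (y : Γ) (ys : List Γ) :
    dlev (x :: xs) (y :: ys) =
      min (1 + dlev xs (y :: ys)) (min (1 + dlev (x :: xs) ys)
        ((if x = y then 0 else 1) + dlev xs ys)) :=
  levenshtein_cons_cons _ x xs y ys

theorem eq_of_dlev_eq_zero : ∀ {S S' : List Γ}, dlev S S' = 0 → S = S'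
  | [], S', h => by simp_all
  | x :: xs, [], h => by simp at h
  | x :: xs, y :: ys, h => by
    rw [dlev_cons_cons] at h
    split_ifs at h with hxy
    · rw [hxy, eq_of_dlev_eq_zero (S := xs) (S' := ys) (by omega)]
    · omega

end dlev

inductive SingleEdit {Γ : Type*} : List Γ → List Γ → Prop
  | insertHead (a : Γ) (S : List Γ) : SingleEdit S (a :: S)
  | deleteHead (x : Γ) (S : List Γ) : SingleEdit (x :: S) S
  | substituteHead (x b : Γ) (S : List Γ) : SingleEdit (x :: S) (b :: S)
  | cons (x : Γ) {S S' : List Γ} : SingleEdit S S' → SingleEdit (x :: S) (x :: S')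

theorem SingleEdit.of_dlev_eq_one {Γ : Type*} [DecidableEq Γ] :
    ∀ {S S' : List Γ}, dlev S S' = 1 → SingleEdit S S'
  | [], S', h => by
    obtain ⟨a, rfl⟩ := List.length_eq_one_iff.mp ((dlev_nil_left S').symm.trans h)
    exact .insertHead a []
  | x :: xs, [], h => by
    obtain rfl : xs = [] := List.length_eq_zero_iff.mp (by simpa using h)
    exact .deleteHead x []
  | x :: xs, y :: ys, h => by
    rw [dlev_cons_cons] at h
    rcases Nat.lt_or_ge (dlev xs (y :: ys)) 1 with hdel | hdel
    · rw [eq_of_dlev_eq_zero (by omega : dlev xs (y :: ys) = 0)]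
      exact .deleteHead x _
    rcases Nat.lt_or_ge (dlev (x :: xs) ys) 1 with hins | hins
    · rw [eq_of_dlev_eq_zero (by omega : dlev (x :: xs) ys = 0)]
      exact .insertHead y _
    split_ifs at h with hxy
    · subst hxy
      exact .cons x (of_dlev_eq_one (S := xs) (S' := ys) (by omega))
    · rw [eq_of_dlev_eq_zero (by omega : dlev xs ys = 0)]
      exact .substituteHead x y _

theorem phi_cons {Γ : Type*} (x : Γ) (S : List Γ) : phi (x :: S) = none :: some x :: phi S := by
  simp [phi]

theorem psi_phi {Γ : Type*} (S : List Γ) : psi (phi S) = S := by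
  induction S with
  | nil => rfl
  | cons x S ih => simpa [phi_cons, psi] using ih

theorem SingleEdit.exists_eq_psi_set_phi {Γ : Type*} {S S' : List Γ} (h : SingleEdit S S') :
    ∃ i < 2 * S.length + 1, ∃ c : Option Γ, S' = psi ((phi S).set i c) := by
  induction h with
  | insertHead a S =>
    refine ⟨0, by omega, some a, ?_⟩
    simpa [phi, psi] using (psi_phi S).symm
  | deleteHead x S =>
    refine ⟨1, by simp, none, ?_⟩
    simpa [phi_cons, psi] using (psi_phi S).symm
  | substituteHead x b S =>
    refine ⟨1, by simp, some b, ?_⟩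
    simpa [phi_cons, psi] using (psi_phi S).symm
  | cons x _ ih =>
    obtain ⟨i, hi, c, rfl⟩ := ih
    refine ⟨i + 2, by simp; omega, c, ?_⟩
    simp [phi_cons, psi]

theorem char_dlev_one_general {Γ : Type*} [DecidableEq Γ] (S S' : List Γ)
    (h : dlev S S' = 1) :
    ∃ i < 2 * S.length + 1, ∃ c : Option Γ, S' = psi ((phi S).set i c) :=
  (SingleEdit.of_dlev_eq_one h).exists_eq_psi_set_phi

/-- Characterization of Levenshtein-distance-1 operations. -/
theorem char_dlev_one {Γ : Type*} [DecidableEq Γ] (S S' : List Γ)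
    (hS : S ≠ []) (h : dlev S S' = 1) :
    ∃ i < 2 * S.length + 1, ∃ c : Option Γ, S' = psi ((phi S).set i c) :=
  char_dlev_one_general S S' h
end

section
/- (Optimality of the thresholded vector for projection onto the probability simplex.) Let n ≥ 1, let û : Fin n → ℝ, and let λ : ℝ satisfy ∑_i max(û_i − λ, 0) = 1. Define u : Fin n → ℝ by u_i = max(û_i − λ, 0). Then u lies in the probability simplex (u_i ≥ 0 for all i and ∑_i u_i = 1), and for every v : Fin n → ℝ with v_i ≥ 0 for all i and ∑_i v_i = 1, one has ∑_i (u_i − û_i)² ≤ ∑_i (v_i − û_i)²; that is, u minimizes the squared Euclidean distance to û over the simplex. -/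
/-- Optimality of the thresholded vector for Euclidean projection onto the
probability simplex: if `λ` satisfies `∑ i, max (û i - λ) 0 = 1`, then
`u i = max (û i - λ) 0` lies in the simplex and minimizes the squared Euclidean
distance to `û` over the simplex. -/
theorem simplex_projection_optimal (n : ℕ) (hn : 1 ≤ n)
    (uhat : Fin n → ℝ) (lam : ℝ)
    (hlam : ∑ i, max (uhat i - lam) 0 = 1) :
    (∀ i, 0 ≤ max (uhat i - lam) 0) ∧
    (∑ i, max (uhat i - lam) 0 = 1) ∧
    ∀ v : Fin n → ℝ, (∀ i, 0 ≤ v i) → (∑ i, v i = 1) →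
      ∑ i, (max (uhat i - lam) 0 - uhat i) ^ 2 ≤ ∑ i, (v i - uhat i) ^ 2 := by
  refine ⟨fun i => le_max_right _ _, hlam, ?_⟩
  intro v hv hsum
  set u : Fin n → ℝ := fun i => max (uhat i - lam) 0 with hu
  -- the complementary-slackness term is nonnegative
  have hkey : 0 ≤ ∑ i, (v i - u i) * (u i - (uhat i - lam)) := by
    apply Finset.sum_nonneg
    intro i _
    rcases le_or_gt 0 (uhat i - lam) with h | h
    · have : u i = uhat i - lam := max_eq_left h
      rw [this]; simp
    · have hui : u i = 0 := max_eq_right h.le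
      rw [hui]
      have h1 : 0 ≤ v i - 0 := by simpa using hv i
      have h2 : 0 ≤ 0 - (uhat i - lam) := by linarith
      exact mul_nonneg h1 h2
  -- the lambda part sums to zero
  have h0 : ∑ i, lam * (u i - v i) = 0 := by
    rw [← Finset.mul_sum, Finset.sum_sub_distrib]
    have : ∑ i, u i = 1 := hlam
    rw [this, hsum]
    ring
  -- cross term nonneg
  have hcross : 0 ≤ ∑ i, (v i - u i) * (u i - uhat i) := by
    have heq : ∑ i, (v i - u i) * (u i - uhat i)
        = ∑ i, (lam * (u i - v i) + (v i - u i) * (u i - (uhat i - lam))) := by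
      apply Finset.sum_congr rfl
      intro i _
      ring
    rw [heq, Finset.sum_add_distrib, h0, zero_add]
    exact hkey
  -- expansion
  have hexp : ∑ i, (v i - uhat i) ^ 2
      = ∑ i, (u i - uhat i) ^ 2 + ∑ i, (v i - u i) ^ 2
        + 2 * ∑ i, (v i - u i) * (u i - uhat i) := by
    rw [Finset.mul_sum, ← Finset.sum_add_distrib, ← Finset.sum_add_distrib]
    apply Finset.sum_congr rfl
    intro i _
    ring
  have hsq : 0 ≤ ∑ i, (v i - u i) ^ 2 :=
    Finset.sum_nonneg fun i _ => sq_nonneg _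
  calc ∑ i, (u i - uhat i) ^ 2 ≤ ∑ i, (v i - uhat i) ^ 2 := by
        rw [hexp]; linarith
end
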